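/- arXiv:2602.08476 — 5 statements merged into one kernel-verified Lean document; each statement's English description precedes it below -/
import Mathlib

section
/- Let x₀ ∈ ℝ², r > 0 and 0 < δ < 1. Let g : ℝ² → ℝ² be a map that is continuous on the closed unit ball B̄(0,1) and satisfies ‖g(z) − (x₀ + r z)‖ ≤ δ r for every z with ‖z‖ = 1. Then the image g(B̄(0,1)) contains the open ball B(x₀, (1−δ) r). -/
/-!
If `y` in the small ball were missed by `g` on the disk, `g - y` would be a nonvanishing map
on a convex set, hence `g - y = exp ∘ L` with `L` continuous (the closed disk is simply connected
and `exp` is a covering of `ℂ \ {0}`). On the unit circle, `g - y` stays closer to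
`z ↦ (x₀ - y) + r z` than the latter is to `0`, and that map in turn stays closer to `z ↦ r z`
than to `0`, so continuous logarithms pass along this chain. But `z ↦ r z` has no continuous
logarithm on the circle, since its lift along `t ↦ e^{it}` gains `2πi` over `[0, 2π]`.
-/

open Metric

noncomputable section

abbrev E2 : Type := EuclideanSpace ℝ (Fin 2)

open Complex Set

def HasContinuousLogOn {X : Type*} [TopologicalSpace X] (f : X → ℂ) (S : Set X) : Prop :=
  ∃ L : X → ℂ, ContinuousOn L S ∧ ∀ z ∈ S, exp (L z) = f z

section

variable {X : Type*} [TopologicalSpace X] {f g : X → ℂ} {S T : Set X}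

theorem HasContinuousLogOn.mono (h : HasContinuousLogOn f S) (hTS : T ⊆ S) :
    HasContinuousLogOn f T :=
  let ⟨L, hL, hexp⟩ := h
  ⟨L, hL.mono hTS, fun z hz => hexp z (hTS hz)⟩

theorem HasContinuousLogOn.of_norm_sub_lt (hf : HasContinuousLogOn f S) (hg : ContinuousOn g S)
    (hfg : ∀ z ∈ S, ‖f z - g z‖ < ‖g z‖) : HasContinuousLogOn g S := by
  obtain ⟨L, hL, hexp⟩ := hf
  have hg0 : ∀ z ∈ S, g z ≠ 0 := fun z hz =>
    norm_pos_iff.mp ((norm_nonneg _).trans_lt (hfg z hz))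
  have hslit : ∀ z ∈ S, f z / g z ∈ slitPlane := fun z hz => by
    have hquot : f z / g z = 1 + (f z - g z) / g z := by field_simp [hg0 z hz]; ring
    rw [hquot]
    refine mem_slitPlane_of_norm_lt_one ?_
    rw [norm_div, div_lt_one (norm_pos_iff.mpr (hg0 z hz))]
    exact hfg z hz
  have hfc : ContinuousOn f S := hL.cexp.congr fun z hz => (hexp z hz).symm
  refine ⟨fun z => L z - log (f z / g z), hL.sub ((hfc.div hg hg0).clog hslit), fun z hz => ?_⟩
  rw [exp_sub, exp_log (slitPlane_ne_zero (hslit z hz)), hexp z hz,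
    div_div_cancel₀ (by rw [← hexp z hz]; exact exp_ne_zero _)]

end

theorem Convex.hasContinuousLogOn {E : Type*} [NormedAddCommGroup E] [NormedSpace ℝ E]
    {S : Set E} (hS : Convex ℝ S) {f : E → ℂ} (hf : ContinuousOn f S)
    (hf0 : ∀ z ∈ S, f z ≠ 0) : HasContinuousLogOn f S := by
  rcases S.eq_empty_or_nonempty with rfl | ⟨z₀, hz₀⟩
  · exact ⟨0, continuousOn_empty _, fun _ h => h.elim⟩
  have := hS.contractibleSpace ⟨z₀, hz₀⟩
  have := hS.locallyPathConnectedSpace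
  obtain ⟨F, ⟨-, hF⟩, -⟩ := isCoveringMapOn_exp.existsUnique_continuousMap_lifts
    ⟨S.domRestrict f, hf.domRestrict⟩ (a₀ := ⟨z₀, hz₀⟩) (exp_log (hf0 z₀ hz₀))
    fun z => hf0 z z.2
  have hext : S.domRestrict (Function.extend Subtype.val F 0) = F :=
    funext (Subtype.val_injective.extend_apply F 0)
  refine ⟨Function.extend Subtype.val F 0, ?_, fun z hz => ?_⟩
  · rw [continuousOn_iff_continuous_domRestrict, hext]
    exact F.continuous
  · rw [← hext] at hF
    exact congrFun hF ⟨z, hz⟩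

theorem not_hasContinuousLogOn_mul_sphere {a : ℂ} (ha : a ≠ 0) :
    ¬ HasContinuousLogOn (fun z => a * z) (sphere 0 1) := by
  rintro ⟨L, hL, hexp⟩
  have hmem : ∀ t : ℝ, exp (t * I) ∈ sphere (0 : ℂ) 1 := fun t => by simp
  set Λ : ℝ → ℂ := fun t => L (exp (t * I)) - L 1
  have hΛ : Continuous Λ := (hL.comp_continuous (by fun_prop) hmem).sub continuous_const
  have hΛexp : ∀ t : ℝ, exp (Λ t) = exp (t * I) := fun t => by
    simp only [Λ, exp_sub, hexp _ (hmem t), hexp 1 (by simp)]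
    field_simp
  -- `Λ` and `t ↦ t I` are lifts of `t ↦ e^{it}` through the covering `exp`, equal at `0`
  have hlift : Λ = fun t : ℝ => t * I :=
    isCoveringMap_exp.eq_of_comp_eq hΛ (by fun_prop)
      (funext fun t => Subtype.ext (hΛexp t)) 0 (by simp [Λ])
  have h2π := congrFun hlift (2 * Real.pi)
  simp [Λ, exp_two_pi_mul_I, Real.pi_ne_zero] at h2π

theorem not_hasContinuousLogOn_add_mul_sphere {a b : ℂ} (hab : ‖b‖ < ‖a‖) :
    ¬ HasContinuousLogOn (fun z => b + a * z) (sphere 0 1) := fun h =>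
  not_hasContinuousLogOn_mul_sphere (norm_pos_iff.mp ((norm_nonneg b).trans_lt hab))
    (h.of_norm_sub_lt (by fun_prop) fun z hz => by
      simpa [mem_sphere_zero_iff_norm.mp hz] using hab)

theorem ball_subset_image_closedBall_of_norm_sub_le {f : ℂ → ℂ} {c a : ℂ} {ε : ℝ}
    (hf : ContinuousOn f (closedBall 0 1))
    (hclose : ∀ z ∈ sphere (0 : ℂ) 1, ‖f z - (c + a * z)‖ ≤ ε) :
    ball c (‖a‖ - ε) ⊆ f '' closedBall 0 1 := by
  intro w hw
  by_contra hw'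
  have hε : 0 ≤ ε := (norm_nonneg _).trans (hclose 1 (by simp))
  have hcw : ‖c - w‖ + ε < ‖a‖ := by
    rw [mem_ball, dist_eq_norm, ← norm_neg, neg_sub] at hw
    linarith
  have hlog : HasContinuousLogOn (fun z => f z - w) (sphere 0 1) :=
    ((convex_closedBall 0 1).hasContinuousLogOn (hf.sub continuousOn_const)
      fun z hz h => hw' ⟨z, hz, sub_eq_zero.mp h⟩).mono sphere_subset_closedBall
  refine not_hasContinuousLogOn_add_mul_sphere (a := a) (b := c - w) (by linarith)
    (hlog.of_norm_sub_lt (by fun_prop) fun z hz => ?_)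
  have hz1 : ‖z‖ = 1 := mem_sphere_zero_iff_norm.mp hz
  calc ‖f z - w - (c - w + a * z)‖ = ‖f z - (c + a * z)‖ := by ring_nf
    _ ≤ ε := hclose z hz
    _ < ‖a * z‖ - ‖c - w‖ := by rw [norm_mul, hz1, mul_one]; linarith
    _ ≤ ‖c - w + a * z‖ := by
      have h := norm_sub_le (c - w + a * z) (c - w)
      rw [add_sub_cancel_left] at h
      linarith

theorem stmt3_general (x₀ : E2) (r δ : ℝ)
    (g : E2 → E2) (hg : ContinuousOn g (closedBall (0 : E2) 1))
    (hclose : ∀ z : E2, ‖z‖ = 1 → ‖g z - (x₀ + r • z)‖ ≤ δ * r) :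
    ball x₀ ((1 - δ) * r) ⊆ g '' (closedBall (0 : E2) 1) := by
  let u : ℂ ≃ₗᵢ[ℝ] E2 := Complex.orthonormalBasisOneI.repr
  have hu : MapsTo u (closedBall 0 1) (closedBall 0 1) := fun z hz => by simpa using hz
  have hradius : (1 - δ) * r ≤ ‖(r : ℂ)‖ - δ * r := by
    rw [norm_real, Real.norm_eq_abs]
    linarith [le_abs_self r]
  intro y hy
  obtain ⟨z, hz, hgz⟩ := ball_subset_image_closedBall_of_norm_sub_le
    (f := fun z => u.symm (g (u z))) (c := u.symm x₀) (a := r) (ε := δ * r)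
    (u.symm.continuous.comp_continuousOn (hg.comp u.continuous.continuousOn hu))
    (fun z hz => by
      have h := hclose (u z) (by simpa using hz)
      rwa [← u.symm.norm_map, map_sub, map_add, map_smul, u.symm_apply_apply, real_smul] at h)
    (ball_subset_ball hradius (by rwa [mem_ball, u.symm.dist_map]))
  exact ⟨u z, hu hz, by simpa using congrArg u hgz⟩

theorem stmt3 (x₀ : E2) (r δ : ℝ) (hr : 0 < r) (hδ0 : 0 < δ) (hδ1 : δ < 1)
    (g : E2 → E2) (hg : ContinuousOn g (closedBall (0 : E2) 1))
    (hclose : ∀ z : E2, ‖z‖ = 1 → ‖g z - (x₀ + r • z)‖ ≤ δ * r) :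
    ball x₀ ((1 - δ) * r) ⊆ g '' (closedBall (0 : E2) 1) :=
  stmt3_general x₀ r δ g hg hclose
end
end

section
/- Let x₀ ∈ ℝ², r > 0 and 0 < δ < 1. Let γ : S¹ → ℝ² be a continuous closed curve such that ‖γ(ω) − (x₀ + r ω)‖ ≤ δ r for every ω ∈ S¹. Then every closed half-line emanating from x₀, i.e. every set of the form {x₀ + t e : t ≥ 0} with e a unit vector of ℝ², intersects the image γ(S¹). -/
/-!
Write `v ω = γ ω - x₀`. Since `‖v ω - r • ω‖ ≤ δ r < r`, we have `⟪v ω, ω⟫ > 0` on the unit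
circle. Let `f` be `e` rotated by a right angle. On the half circle from `-f` through `e` to `f`,
`⟪f, v ω⟫` goes from negative to positive, so by the intermediate value theorem it vanishes at
some `ω`. There `v ω` is a multiple of `e`, and `⟪v ω, ω⟫ > 0` together with `⟪e, ω⟫ ≥ 0` makes
the multiple positive.
-/

open Metric

noncomputable section

open Real
open scoped RealInnerProductSpace

section

variable {F : Type*} [NormedAddCommGroup F] [InnerProductSpace ℝ F]

theorem inner_pos_of_norm_sub_lt_norm {u v : F} (h : ‖v - u‖ < ‖u‖) : 0 < ⟪v, u⟫ := by
  have h' : ‖v - u‖ ^ 2 < ‖u‖ ^ 2 := by gcongr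
  rw [norm_sub_sq_real] at h'
  nlinarith [sq_nonneg ‖v‖]

theorem norm_cos_smul_add_sin_smul {e f : F} (he : ‖e‖ = 1) (hf : ‖f‖ = 1) (hef : ⟪e, f⟫ = 0)
    (s : ℝ) : ‖cos s • e + sin s • f‖ = 1 := by
  have hsq : ‖cos s • e + sin s • f‖ ^ 2 = 1 := by
    rw [norm_add_sq_real, norm_smul, norm_smul, real_inner_smul_left, real_inner_smul_right,
      hef, he, hf, Real.norm_eq_abs, Real.norm_eq_abs]
    nlinarith [sq_abs (cos s), sq_abs (sin s), sin_sq_add_cos_sq s]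
  exact (pow_eq_one_iff_of_nonneg (norm_nonneg _) two_ne_zero).1 hsq

theorem exists_mem_sphere_inner_eq_zero_of_inner_pos {e f : F} (he : ‖e‖ = 1) (hf : ‖f‖ = 1)
    (hef : ⟪e, f⟫ = 0) {w : F → F} (hw : ContinuousOn w (sphere 0 1))
    (hpos : ∀ u ∈ sphere (0 : F) 1, 0 < ⟪w u, u⟫) :
    ∃ u ∈ sphere (0 : F) 1, ⟪f, w u⟫ = 0 ∧ 0 < ⟪e, w u⟫ := by
  set c : ℝ → F := fun s ↦ cos s • e + sin s • f
  have hc : ∀ s, c s ∈ sphere (0 : F) 1 := fun s ↦ by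
    simpa using norm_cos_smul_add_sin_smul he hf hef s
  have hinner : ∀ s, ⟪w (c s), c s⟫ = cos s * ⟪e, w (c s)⟫ + sin s * ⟪f, w (c s)⟫ := fun s ↦ by
    simp only [c, inner_add_right, real_inner_smul_right, real_inner_comm e, real_inner_comm f]
  have hcont : ContinuousOn (fun s ↦ ⟪f, w (c s)⟫) (Set.Icc (-(π / 2)) (π / 2)) :=
    continuousOn_const.inner <| hw.comp (by fun_prop) fun s _ ↦ hc s
  have hlow : ⟪f, w (c (-(π / 2)))⟫ < 0 := by
    simpa [hinner] using hpos _ (hc (-(π / 2)))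
  have hhigh : 0 < ⟪f, w (c (π / 2))⟫ := by
    simpa [hinner] using hpos _ (hc (π / 2))
  obtain ⟨s, hs, hzero⟩ := intermediate_value_Icc (by linarith [pi_pos]) hcont
    ⟨hlow.le, hhigh.le⟩
  refine ⟨c s, hc s, hzero, ?_⟩
  have h := hinner s ▸ hpos _ (hc s)
  rw [show ⟪f, w (c s)⟫ = 0 from hzero, mul_zero, add_zero] at h
  exact pos_of_mul_pos_right h (cos_nonneg_of_mem_Icc hs)

theorem inner_sub_pos_of_norm_sub_le {x₀ u v : F} {r δ : ℝ} (hr : 0 < r) (hδ : δ < 1)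
    (hu : ‖u‖ = 1) (h : ‖v - (x₀ + r • u)‖ ≤ δ * r) : 0 < ⟪v - x₀, u⟫ := by
  have hnorm : ‖r • u‖ = r := by rw [norm_smul, hu, mul_one, Real.norm_of_nonneg hr.le]
  have hlt : ‖(v - x₀) - r • u‖ < ‖r • u‖ := by
    rw [hnorm, sub_sub]
    exact h.trans_lt (by nlinarith)
  have := inner_pos_of_norm_sub_lt_norm hlt
  rw [real_inner_smul_right] at this
  exact pos_of_mul_pos_right this hr.le

end

theorem Orientation.exists_nonneg_smul_eq_of_inner_rightAngleRotation_eq_zero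
    {E : Type*} [NormedAddCommGroup E] [InnerProductSpace ℝ E] [Fact (Module.finrank ℝ E = 2)]
    (o : Orientation ℝ E (Fin 2)) {e v : E} (he : e ≠ 0) (hJ : ⟪o.rightAngleRotation e, v⟫ = 0)
    (hpos : 0 ≤ ⟪e, v⟫) : ∃ t : ℝ, 0 ≤ t ∧ t • e = v := by
  rw [o.inner_rightAngleRotation_left] at hJ
  exact ((o.nonneg_inner_and_areaForm_eq_zero_iff_sameRay e v).1 ⟨hpos, hJ⟩).exists_nonneg_left he

theorem stmt4_general (x₀ : E2) (r δ : ℝ) (hr : 0 < r) (hδ1 : δ < 1)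
    (γ : E2 → E2) (hγ : ContinuousOn γ (sphere (0 : E2) 1))
    (hclose : ∀ ω ∈ sphere (0 : E2) 1, ‖γ ω - (x₀ + r • ω)‖ ≤ δ * r) :
    ∀ e : E2, ‖e‖ = 1 →
      ∃ t : ℝ, 0 ≤ t ∧ ∃ ω ∈ sphere (0 : E2) 1, γ ω = x₀ + t • e := by
  intro e he
  have : Fact (Module.finrank ℝ E2 = 2) := ⟨finrank_euclideanSpace_fin⟩
  let o : Orientation ℝ E2 (Fin 2) := (EuclideanSpace.basisFun (Fin 2) ℝ).toBasis.orientation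
  obtain ⟨ω, hω, hJ, he'⟩ := exists_mem_sphere_inner_eq_zero_of_inner_pos (w := (γ · - x₀)) he
    ((o.rightAngleRotation.norm_map e).trans he) (by simp) (hγ.sub continuousOn_const)
    fun ω hω ↦ inner_sub_pos_of_norm_sub_le hr hδ1 (mem_sphere_zero_iff_norm.1 hω) (hclose ω hω)
  obtain ⟨t, ht, hte⟩ := o.exists_nonneg_smul_eq_of_inner_rightAngleRotation_eq_zero
    (norm_ne_zero_iff.1 (by simp [he])) hJ he'.le
  exact ⟨t, ht, ω, hω, by rw [hte, add_sub_cancel]⟩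

theorem stmt4 (x₀ : E2) (r δ : ℝ) (hr : 0 < r) (hδ0 : 0 < δ) (hδ1 : δ < 1)
    (γ : E2 → E2) (hγ : ContinuousOn γ (sphere (0 : E2) 1))
    (hclose : ∀ ω ∈ sphere (0 : E2) 1, ‖γ ω - (x₀ + r • ω)‖ ≤ δ * r) :
    ∀ e : E2, ‖e‖ = 1 →
      ∃ t : ℝ, 0 ≤ t ∧ ∃ ω ∈ sphere (0 : E2) 1, γ ω = x₀ + t • e :=
  stmt4_general x₀ r δ hr hδ1 γ hγ hclose
end
end

section
/- There exists a constant C > 0 with the following property: for every Λ > 0, every Λ-upper Ahlfors regular set S ⊆ ℝ³, and all continuously differentiable, compactly supported functions u, v : ℝ³ → ℝ, one has ∫_S |u v| dH² ≤ C Λ (∫_{ℝ³} (u² + ‖∇u‖²) dx)^{1/2} (∫_{ℝ³} (v² + ‖∇v‖²) dx)^{1/2}. -/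
/-!
Averaging the fundamental theorem of calculus over the segments from `x` to the points of the
unit ball around `x` gives
`|B| |w x| ≤ ∫_B |w (x + z)| dz + ∫₀¹ ∫_B ‖Dw (x + t z)‖ dz dt`.
By Cauchy–Schwarz and Fubini, the `L²(ν)`-norm squared of the slice at scale `t` is at most
`|B| t⁻ᵈ ∫ ‖Dw y‖² ν(B(y, t)) dy`, and the codimension-one growth `ν(B(y, t)) ≤ K tᵈ⁻¹` turns
this into `O(t⁻¹)`. A second Cauchy–Schwarz in `t` with the weight `√t` makes the `t`-integral
converge, so `∫ |w|² dν ≲ K ‖w‖²_{H¹}`; for `ν = H²|S` with `S` upper Ahlfors regular this is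
the trace estimate, and Cauchy–Schwarz on `S` polarizes it.
-/

open MeasureTheory Metric

noncomputable section

abbrev E3 : Type := EuclideanSpace ℝ (Fin 3)

/-- A set `E ⊆ ℝ³` is `Λ`-upper Ahlfors regular. -/
def UpperAhlfors (Λ : ℝ) (E : Set E3) : Prop :=
  ∀ x ∈ E, ∀ r > (0 : ℝ), μH[2] (E ∩ Metric.ball x r) ≤ ENNReal.ofReal (Λ * Real.pi * r ^ 2)

open Set Module
open scoped ENNReal NNReal

theorem ENNReal.add_sq_le (a b : ℝ≥0∞) : (a + b) ^ 2 ≤ 2 * (a ^ 2 + b ^ 2) := by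
  rcases eq_top_or_lt_top a with rfl | ha
  · simp
  rcases eq_top_or_lt_top b with rfl | hb
  · simp
  lift a to ℝ≥0 using ha.ne
  lift b to ℝ≥0 using hb.ne
  exact_mod_cast (_root_.add_sq_le : (a + b) ^ 2 ≤ 2 * (a ^ 2 + b ^ 2))

theorem ENNReal.inv_pow_mul_pow_pred {a : ℝ≥0∞} (ha₀ : a ≠ 0) (ha : a ≠ ∞) {n : ℕ} (hn : n ≠ 0) :
    (a ^ n)⁻¹ * a ^ (n - 1) = a⁻¹ := by
  obtain ⟨m, rfl⟩ := Nat.exists_eq_succ_of_ne_zero hn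
  rw [Nat.succ_sub_one, pow_succ, ENNReal.mul_inv (.inr ha) (.inr ha₀), mul_right_comm,
    ENNReal.inv_mul_cancel (pow_ne_zero _ ha₀) (ENNReal.pow_ne_top ha), one_mul]

section CauchySchwarz

variable {α : Type*} [MeasurableSpace α] {μ : Measure α}

theorem sq_lintegral_mul_le {f g : α → ℝ≥0∞} (hf : AEMeasurable f μ) (hg : AEMeasurable g μ) :
    (∫⁻ a, f a * g a ∂μ) ^ 2 ≤ (∫⁻ a, f a ^ 2 ∂μ) * ∫⁻ a, g a ^ 2 ∂μ := by
  have h := ENNReal.lintegral_mul_le_Lp_mul_Lq μ Real.HolderConjugate.two_two hf hg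
  have hsq : ∀ x : ℝ≥0∞, (x ^ (1 / 2 : ℝ)) ^ 2 = x := fun x => by
    rw [← ENNReal.rpow_natCast, ← ENNReal.rpow_mul]; norm_num
  simp only [Pi.mul_apply, ENNReal.rpow_two] at h
  calc (∫⁻ a, f a * g a ∂μ) ^ 2
      ≤ ((∫⁻ a, f a ^ 2 ∂μ) ^ (1 / 2 : ℝ) * (∫⁻ a, g a ^ 2 ∂μ) ^ (1 / 2 : ℝ)) ^ 2 :=
        ENNReal.pow_le_pow_left h
    _ = (∫⁻ a, f a ^ 2 ∂μ) * ∫⁻ a, g a ^ 2 ∂μ := by rw [mul_pow, hsq, hsq]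

theorem sq_setLIntegral_le_measure_mul {s : Set α} {f : α → ℝ≥0∞}
    (hf : AEMeasurable f (μ.restrict s)) :
    (∫⁻ a in s, f a ∂μ) ^ 2 ≤ μ s * ∫⁻ a in s, f a ^ 2 ∂μ := by
  simpa using sq_lintegral_mul_le aemeasurable_const hf (f := fun _ => (1 : ℝ≥0∞))

end CauchySchwarz

theorem lintegral_Ioc_rpow_neg_half :
    ∫⁻ t in Ioc (0 : ℝ) 1, ENNReal.ofReal (t ^ (-(1 / 2) : ℝ)) = 2 := by
  have hint : IntegrableOn (fun t : ℝ => t ^ (-(1 / 2) : ℝ)) (Ioc 0 1) :=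
    (intervalIntegrable_iff_integrableOn_Ioc_of_le zero_le_one).1
      (intervalIntegral.intervalIntegrable_rpow' (by norm_num))
  rw [← ofReal_integral_eq_lintegral_ofReal hint
    ((ae_restrict_iff' measurableSet_Ioc).2 (.of_forall fun t ht => Real.rpow_nonneg ht.1.le _)),
    ← intervalIntegral.integral_of_le zero_le_one, integral_rpow (Or.inl (by norm_num))]
  norm_num

theorem sq_setLIntegral_Ioc_le {g : ℝ → ℝ≥0∞} (hg : AEMeasurable g (volume.restrict (Ioc 0 1))) :
    (∫⁻ t in Ioc (0 : ℝ) 1, g t) ^ 2 ≤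
      2 * ∫⁻ t in Ioc (0 : ℝ) 1, ENNReal.ofReal (t ^ (1 / 2 : ℝ)) * g t ^ 2 := by
  have hsplit : ∫⁻ t in Ioc (0 : ℝ) 1, g t =
      ∫⁻ t in Ioc (0 : ℝ) 1, ENNReal.ofReal (t ^ (-(1 / 4) : ℝ)) *
        (ENNReal.ofReal (t ^ (1 / 4 : ℝ)) * g t) := by
    refine setLIntegral_congr_fun measurableSet_Ioc fun t ht => ?_
    rw [← mul_assoc, ← ENNReal.ofReal_mul (Real.rpow_nonneg ht.1.le _), ← Real.rpow_add ht.1]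
    norm_num
  have hsq : ∀ t ∈ Ioc (0 : ℝ) 1, ∀ a : ℝ,
      ENNReal.ofReal (t ^ a) ^ 2 = ENNReal.ofReal (t ^ (a * 2)) := by
    intro t ht a
    rw [← ENNReal.ofReal_pow (Real.rpow_nonneg ht.1.le _), ← Real.rpow_mul_natCast ht.1.le]
    norm_num
  calc (∫⁻ t in Ioc (0 : ℝ) 1, g t) ^ 2
      ≤ (∫⁻ t in Ioc (0 : ℝ) 1, ENNReal.ofReal (t ^ (-(1 / 4) : ℝ)) ^ 2) *
          ∫⁻ t in Ioc (0 : ℝ) 1, (ENNReal.ofReal (t ^ (1 / 4 : ℝ)) * g t) ^ 2 := by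
        rw [hsplit]; exact sq_lintegral_mul_le (by fun_prop) (by fun_prop)
    _ = 2 * ∫⁻ t in Ioc (0 : ℝ) 1, ENNReal.ofReal (t ^ (1 / 2 : ℝ)) * g t ^ 2 := by
        rw [← lintegral_Ioc_rpow_neg_half]
        congr 1 <;> refine setLIntegral_congr_fun measurableSet_Ioc fun t ht => ?_
        · rw [hsq t ht]; norm_num
        · rw [mul_pow, hsq t ht]; norm_num

theorem lintegral_sq_setLIntegral_Ioc_le {X : Type*} [MeasurableSpace X] {ν : Measure X}
    [SFinite ν] {G : ℝ → X → ℝ≥0∞} (hG : Measurable (Function.uncurry G)) {c : ℝ≥0∞}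
    (hc : ∀ t ∈ Ioc (0 : ℝ) 1, ∫⁻ x, G t x ^ 2 ∂ν ≤ c * (ENNReal.ofReal t)⁻¹) :
    ∫⁻ x, (∫⁻ t in Ioc (0 : ℝ) 1, G t x) ^ 2 ∂ν ≤ 4 * c := by
  have hweight : ∀ t ∈ Ioc (0 : ℝ) 1, ENNReal.ofReal (t ^ (1 / 2 : ℝ)) * (ENNReal.ofReal t)⁻¹ =
      ENNReal.ofReal (t ^ (-(1 / 2) : ℝ)) := by
    intro t ht
    rw [← ENNReal.ofReal_inv_of_pos ht.1, ← ENNReal.ofReal_mul (Real.rpow_nonneg ht.1.le _),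
      ← Real.rpow_neg_one, ← Real.rpow_add ht.1]
    norm_num
  calc ∫⁻ x, (∫⁻ t in Ioc (0 : ℝ) 1, G t x) ^ 2 ∂ν
      ≤ ∫⁻ x, 2 * (∫⁻ t in Ioc (0 : ℝ) 1, ENNReal.ofReal (t ^ (1 / 2 : ℝ)) * G t x ^ 2) ∂ν :=
        lintegral_mono fun x =>
          sq_setLIntegral_Ioc_le (hG.comp measurable_prodMk_right).aemeasurable
    _ = 2 * ∫⁻ t in Ioc (0 : ℝ) 1, ENNReal.ofReal (t ^ (1 / 2 : ℝ)) * ∫⁻ x, G t x ^ 2 ∂ν := by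
        rw [lintegral_const_mul' _ _ (by norm_num), lintegral_lintegral_swap]
        · simp_rw [lintegral_const_mul' _ _ ENNReal.ofReal_ne_top]
        · exact ((measurable_snd.pow_const _).ennreal_ofReal.mul
            ((hG.comp measurable_swap).pow_const 2)).aemeasurable
    _ ≤ 2 * ∫⁻ t in Ioc (0 : ℝ) 1, c * ENNReal.ofReal (t ^ (-(1 / 2) : ℝ)) := by
        gcongr 1
        refine setLIntegral_mono' measurableSet_Ioc fun t ht => ?_
        calc ENNReal.ofReal (t ^ (1 / 2 : ℝ)) * ∫⁻ x, G t x ^ 2 ∂ν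
            ≤ ENNReal.ofReal (t ^ (1 / 2 : ℝ)) * (c * (ENNReal.ofReal t)⁻¹) := by
              gcongr; exact hc t ht
          _ = c * ENNReal.ofReal (t ^ (-(1 / 2) : ℝ)) := by rw [mul_left_comm, hweight t ht]
    _ = 4 * c := by
        rw [lintegral_const_mul _
          (by fun_prop : Measurable fun t : ℝ => ENNReal.ofReal (t ^ (-(1 / 2) : ℝ))),
          lintegral_Ioc_rpow_neg_half]
        ring

theorem lintegral_setLIntegral_ball_eq {α : Type*} [PseudoMetricSpace α] [MeasurableSpace α]
    [OpensMeasurableSpace α] [SecondCountableTopology α] {μ ν : Measure α} [SFinite μ] [SFinite ν]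
    {F : α → ℝ≥0∞} (hF : Measurable F) (r : ℝ) :
    ∫⁻ x, ∫⁻ y in ball x r, F y ∂μ ∂ν = ∫⁻ y, F y * ν (ball y r) ∂μ := by
  have hmeas : MeasurableSet {p : α × α | dist p.2 p.1 < r} :=
    (isOpen_lt (by fun_prop) continuous_const).measurableSet
  calc ∫⁻ x, ∫⁻ y in ball x r, F y ∂μ ∂ν
      = ∫⁻ x, ∫⁻ y, {p : α × α | dist p.2 p.1 < r}.indicator (fun p => F p.2) (x, y) ∂μ ∂ν := by
        simp_rw [← lintegral_indicator measurableSet_ball]; rfl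
    _ = ∫⁻ y, ∫⁻ x, {p : α × α | dist p.2 p.1 < r}.indicator (fun p => F p.2) (x, y) ∂ν ∂μ :=
        lintegral_lintegral_swap ((hF.comp measurable_snd).indicator hmeas).aemeasurable
    _ = ∫⁻ y, F y * ν (ball y r) ∂μ := by
        refine lintegral_congr fun y => ?_
        rw [← lintegral_indicator_const measurableSet_ball]
        congr 1; ext x
        simp [Set.indicator, mem_ball, dist_comm]

section Trace

variable {E F : Type*} [NormedAddCommGroup E] [NormedSpace ℝ E]
  [NormedAddCommGroup F] [NormedSpace ℝ F] [CompleteSpace F]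

theorem enorm_le_enorm_add_add_lintegral_enorm_fderiv {w : E → F} (hw : ContDiff ℝ 1 w)
    (x z : E) :
    ‖w x‖ₑ ≤ ‖w (x + z)‖ₑ + ‖z‖ₑ * ∫⁻ t in Ioc (0 : ℝ) 1, ‖fderiv ℝ w (x + t • z)‖ₑ := by
  have hderiv : ∀ t : ℝ,
      HasDerivAt (fun s : ℝ => w (x + s • z)) (fderiv ℝ w (x + t • z) z) t :=
    fun t => ((hw.differentiable one_ne_zero _).hasFDerivAt).comp_hasDerivAt t
      (by simpa using ((hasDerivAt_id t).smul_const z).const_add x)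
  have hcont : Continuous fun t : ℝ => fderiv ℝ w (x + t • z) z :=
    ((hw.continuous_fderiv one_ne_zero).comp (by fun_prop)).clm_apply continuous_const
  have hftc : ∫ t in (0 : ℝ)..1, fderiv ℝ w (x + t • z) z = w (x + z) - w x := by
    simpa using intervalIntegral.integral_eq_sub_of_hasDerivAt (fun t _ => hderiv t)
      (hcont.intervalIntegrable 0 1)
  calc ‖w x‖ₑ = ‖w (x + z) - ∫ t in (0 : ℝ)..1, fderiv ℝ w (x + t • z) z‖ₑ := by
        rw [hftc, sub_sub_cancel]
    _ ≤ ‖w (x + z)‖ₑ + ‖∫ t in Ioc (0 : ℝ) 1, fderiv ℝ w (x + t • z) z‖ₑ := by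
        rw [intervalIntegral.integral_of_le zero_le_one]; exact enorm_sub_le
    _ ≤ ‖w (x + z)‖ₑ + ∫⁻ t in Ioc (0 : ℝ) 1, ‖fderiv ℝ w (x + t • z)‖ₑ * ‖z‖ₑ := by
        gcongr
        exact (enorm_integral_le_lintegral_enorm _).trans
          (lintegral_mono fun t => (fderiv ℝ w (x + t • z)).le_opENorm z)
    _ = ‖w (x + z)‖ₑ + ‖z‖ₑ * ∫⁻ t in Ioc (0 : ℝ) 1, ‖fderiv ℝ w (x + t • z)‖ₑ := by
        rw [lintegral_mul_const' _ _ enorm_ne_top, mul_comm]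

variable [MeasurableSpace E] [BorelSpace E]

theorem measure_ball_mul_enorm_le (μ : Measure E) [SFinite μ] {w : E → F} (hw : ContDiff ℝ 1 w)
    (x : E) :
    μ (ball 0 1) * ‖w x‖ₑ ≤ ∫⁻ z in ball 0 1, ‖w (x + z)‖ₑ ∂μ +
      ∫⁻ t in Ioc (0 : ℝ) 1, ∫⁻ z in ball 0 1, ‖fderiv ℝ w (x + t • z)‖ₑ ∂μ := by
  calc μ (ball 0 1) * ‖w x‖ₑ = ∫⁻ z in ball 0 1, ‖w x‖ₑ ∂μ := by
        rw [setLIntegral_const, mul_comm]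
    _ ≤ ∫⁻ z in ball 0 1,
          (‖w (x + z)‖ₑ + ∫⁻ t in Ioc (0 : ℝ) 1, ‖fderiv ℝ w (x + t • z)‖ₑ) ∂μ := by
        refine setLIntegral_mono' measurableSet_ball fun z hz => ?_
        have hz1 : ‖z‖ₑ ≤ 1 := by
          rw [mem_ball_zero_iff] at hz
          simpa using (enorm_le_iff_norm_le (y := (1 : ℝ))).2 (by simpa using hz.le)
        calc ‖w x‖ₑ
            ≤ ‖w (x + z)‖ₑ + ‖z‖ₑ * ∫⁻ t in Ioc (0 : ℝ) 1, ‖fderiv ℝ w (x + t • z)‖ₑ :=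
              enorm_le_enorm_add_add_lintegral_enorm_fderiv hw x z
          _ ≤ _ := by gcongr; exact mul_le_of_le_one_left bot_le hz1
    _ = ∫⁻ z in ball 0 1, ‖w (x + z)‖ₑ ∂μ +
          ∫⁻ t in Ioc (0 : ℝ) 1, ∫⁻ z in ball 0 1, ‖fderiv ℝ w (x + t • z)‖ₑ ∂μ := by
        have hm : Measurable fun z => ‖w (x + z)‖ₑ :=
          (hw.continuous.comp (continuous_const_add x)).enorm.measurable
        rw [lintegral_add_left hm, lintegral_lintegral_swap]
        exact ((hw.continuous_fderiv one_ne_zero).comp (by fun_prop)).enorm.measurable.aemeasurable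

variable [FiniteDimensional ℝ E] (μ : Measure E) [μ.IsAddHaarMeasure]

theorem setLIntegral_ball_comp_add_smul {G : E → ℝ≥0∞} (hG : Measurable G) (x : E) {t : ℝ}
    (ht : 0 < t) :
    ∫⁻ z in ball 0 1, G (x + t • z) ∂μ =
      (ENNReal.ofReal t ^ finrank ℝ E)⁻¹ * ∫⁻ y in ball x t, G y ∂μ := by
  have hmem : ∀ z : E, x + t • z ∈ ball x t ↔ z ∈ ball 0 1 := fun z => by
    simp [mem_ball, dist_eq_norm, norm_smul, abs_of_pos ht, ht]
  have hG' : Measurable fun y => (ball x t).indicator G (x + y) :=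
    (hG.indicator measurableSet_ball).comp (measurable_const_add x)
  calc ∫⁻ z in ball 0 1, G (x + t • z) ∂μ
      = ∫⁻ z, (ball x t).indicator G (x + t • z) ∂μ := by
        rw [← lintegral_indicator measurableSet_ball]
        congr 1; ext z
        by_cases hz : z ∈ ball (0 : E) 1 <;> simp [hz, hmem]
    _ = ∫⁻ y, (ball x t).indicator G (x + y) ∂(Measure.map (t • ·) μ) :=
        (lintegral_map hG' (measurable_const_smul t)).symm
    _ = (ENNReal.ofReal t ^ finrank ℝ E)⁻¹ * ∫⁻ y in ball x t, G y ∂μ := by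
        rw [Measure.map_addHaar_smul μ ht.ne', lintegral_smul_measure,
          lintegral_add_left_eq_self (fun y => (ball x t).indicator G y),
          lintegral_indicator measurableSet_ball, abs_of_pos (by positivity),
          ENNReal.ofReal_inv_of_pos (by positivity), ENNReal.ofReal_pow ht.le]
        rfl

theorem lintegral_sq_setLIntegral_ball_comp_add_smul_le [Nontrivial E] {ν : Measure E}
    [SFinite ν] {K : ℝ≥0∞} {t : ℝ} (ht : 0 < t)
    (hν : ∀ y, ν (ball y t) ≤ K * ENNReal.ofReal t ^ (finrank ℝ E - 1)) {G : E → ℝ≥0∞}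
    (hG : Measurable G) :
    ∫⁻ x, (∫⁻ z in ball 0 1, G (x + t • z) ∂μ) ^ 2 ∂ν ≤
      μ (ball 0 1) * K * (ENNReal.ofReal t)⁻¹ * ∫⁻ y, G y ^ 2 ∂μ := by
  calc ∫⁻ x, (∫⁻ z in ball 0 1, G (x + t • z) ∂μ) ^ 2 ∂ν
      ≤ ∫⁻ x, μ (ball 0 1) * ∫⁻ z in ball 0 1, G (x + t • z) ^ 2 ∂μ ∂ν :=
        lintegral_mono fun x => sq_setLIntegral_le_measure_mul (by fun_prop)
    _ = μ (ball 0 1) *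
          ((ENNReal.ofReal t ^ finrank ℝ E)⁻¹ * ∫⁻ y, G y ^ 2 * ν (ball y t) ∂μ) := by
        rw [lintegral_const_mul' _ _ measure_ball_lt_top.ne]
        simp_rw [setLIntegral_ball_comp_add_smul μ (hG.pow_const 2) _ ht]
        rw [lintegral_const_mul' _ _ (ENNReal.inv_ne_top.2 (pow_ne_zero _ (by simpa using ht))),
          lintegral_setLIntegral_ball_eq (hG.pow_const 2)]
    _ ≤ μ (ball 0 1) * ((ENNReal.ofReal t ^ finrank ℝ E)⁻¹ *
          ∫⁻ y, G y ^ 2 * (K * ENNReal.ofReal t ^ (finrank ℝ E - 1)) ∂μ) := by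
        gcongr with y; exact hν y
    _ = μ (ball 0 1) * K * (ENNReal.ofReal t)⁻¹ * ∫⁻ y, G y ^ 2 ∂μ := by
        rw [lintegral_mul_const _ (hG.pow_const 2), ← ENNReal.inv_pow_mul_pow_pred
          (by simpa using ht) ENNReal.ofReal_ne_top (finrank_pos (R := ℝ) (M := E)).ne']
        ring

theorem measure_ball_mul_lintegral_enorm_sq_le [Nontrivial E] {ν : Measure E} [SFinite ν]
    {K : ℝ≥0∞}
    (hν : ∀ y, ∀ r ∈ Ioc (0 : ℝ) 1, ν (ball y r) ≤ K * ENNReal.ofReal r ^ (finrank ℝ E - 1))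
    {w : E → F} (hw : ContDiff ℝ 1 w) :
    μ (ball 0 1) * ∫⁻ x, ‖w x‖ₑ ^ 2 ∂ν ≤
      8 * K * (∫⁻ x, ‖w x‖ₑ ^ 2 ∂μ + ∫⁻ x, ‖fderiv ℝ w x‖ₑ ^ 2 ∂μ) := by
  set c := μ (ball (0 : E) 1)
  set A : E → ℝ≥0∞ := fun x => ∫⁻ z in ball 0 1, ‖w (x + z)‖ₑ ∂μ
  set B : ℝ → E → ℝ≥0∞ := fun t x => ∫⁻ z in ball 0 1, ‖fderiv ℝ w (x + t • z)‖ₑ ∂μ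
  have hDw := hw.continuous_fderiv one_ne_zero
  have hA : Measurable A :=
    (hw.continuous.comp continuous_add).enorm.measurable.lintegral_prod_right'
  have hB : Measurable (Function.uncurry B) :=
    (hDw.comp (by fun_prop : Continuous fun q : (ℝ × E) × E => q.1.2 + q.1.1 • q.2)).enorm
      |>.measurable.lintegral_prod_right'
  have hA2 : ∫⁻ x, A x ^ 2 ∂ν ≤ c * K * ∫⁻ x, ‖w x‖ₑ ^ 2 ∂μ := by
    simpa using lintegral_sq_setLIntegral_ball_comp_add_smul_le μ one_pos
      (fun y => hν y 1 ⟨one_pos, le_rfl⟩) hw.continuous.enorm.measurable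
  have hT2 : ∫⁻ x, (∫⁻ t in Ioc (0 : ℝ) 1, B t x) ^ 2 ∂ν ≤
      4 * (c * K * ∫⁻ x, ‖fderiv ℝ w x‖ₑ ^ 2 ∂μ) :=
    lintegral_sq_setLIntegral_Ioc_le hB fun t ht =>
      (lintegral_sq_setLIntegral_ball_comp_add_smul_le μ ht.1 (fun y => hν y t ht)
        hDw.enorm.measurable).trans_eq (by ring)
  have hc : c ≠ 0 := (measure_ball_pos μ 0 one_pos).ne'
  have hc' : c ≠ ∞ := measure_ball_lt_top.ne
  rw [← ENNReal.mul_le_mul_iff_right hc hc']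
  calc c * (c * ∫⁻ x, ‖w x‖ₑ ^ 2 ∂ν) = ∫⁻ x, (c * ‖w x‖ₑ) ^ 2 ∂ν := by
        rw [← mul_assoc, ← sq, ← lintegral_const_mul' _ _ (ENNReal.pow_ne_top hc')]
        simp_rw [mul_pow]
    _ ≤ ∫⁻ x, 2 * (A x ^ 2 + (∫⁻ t in Ioc (0 : ℝ) 1, B t x) ^ 2) ∂ν :=
        lintegral_mono fun x => (ENNReal.pow_le_pow_left (measure_ball_mul_enorm_le μ hw x)).trans
          (ENNReal.add_sq_le _ _)
    _ = 2 * (∫⁻ x, A x ^ 2 ∂ν + ∫⁻ x, (∫⁻ t in Ioc (0 : ℝ) 1, B t x) ^ 2 ∂ν) := by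
        rw [lintegral_const_mul' _ _ (by norm_num), lintegral_add_left (hA.pow_const 2)]
    _ ≤ 2 * (4 * (c * K * ∫⁻ x, ‖w x‖ₑ ^ 2 ∂μ) + 4 * (c * K * ∫⁻ x, ‖fderiv ℝ w x‖ₑ ^ 2 ∂μ)) := by
        gcongr
        exact hA2.trans (le_mul_of_one_le_left' (by norm_num))
    _ = c * (8 * K * (∫⁻ x, ‖w x‖ₑ ^ 2 ∂μ + ∫⁻ x, ‖fderiv ℝ w x‖ₑ ^ 2 ∂μ)) := by ring

end Trace

theorem lintegral_enorm_sq_add_lintegral_enorm_fderiv_sq {E : Type*} [NormedAddCommGroup E]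
    [InnerProductSpace ℝ E] [CompleteSpace E] [MeasurableSpace E] [BorelSpace E] {μ : Measure E}
    [IsFiniteMeasureOnCompacts μ] {w : E → ℝ} (hw : ContDiff ℝ 1 w) (hcw : HasCompactSupport w) :
    ∫⁻ x, ‖w x‖ₑ ^ 2 ∂μ + ∫⁻ x, ‖fderiv ℝ w x‖ₑ ^ 2 ∂μ =
      ENNReal.ofReal (∫ x, (w x ^ 2 + ‖gradient w x‖ ^ 2) ∂μ) := by
  have hnorm : ∀ x, ‖gradient w x‖ = ‖fderiv ℝ w x‖ := fun x => by
    rw [← toDual_gradient, LinearIsometryEquiv.norm_map]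
  have hint : Integrable (fun x => w x ^ 2 + ‖fderiv ℝ w x‖ ^ 2) μ := by
    refine Continuous.integrable_of_hasCompactSupport
      ((hw.continuous.pow 2).add ((hw.continuous_fderiv one_ne_zero).norm.pow 2)) ?_
    exact (hcw.comp_left (g := fun a => a ^ 2) (by simp)).add
      ((hcw.fderiv ℝ).comp_left (g := fun L => ‖L‖ ^ 2) (by simp))
  simp_rw [hnorm]
  rw [ofReal_integral_eq_lintegral_ofReal hint (.of_forall fun x => by positivity),
    ← lintegral_add_left (hw.continuous.enorm.measurable.pow_const 2)]
  congr 1; ext x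
  rw [ENNReal.ofReal_add (by positivity) (by positivity), ← sq_abs (w x), ← Real.norm_eq_abs,
    ENNReal.ofReal_pow (norm_nonneg _), ENNReal.ofReal_pow (norm_nonneg _), ofReal_norm,
    ofReal_norm]

namespace UpperAhlfors

variable {Λ : ℝ} {S : Set E3}

theorem measure_restrict_ball_le (hS : UpperAhlfors Λ S) (y : E3) {r : ℝ} (hr : 0 < r) :
    μH[2].restrict S (ball y r) ≤ ENNReal.ofReal (4 * Λ * Real.pi) * ENNReal.ofReal r ^ 2 := by
  rw [Measure.restrict_apply measurableSet_ball, ← ENNReal.ofReal_pow hr.le,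
    ← ENNReal.ofReal_mul' (by positivity)]
  rcases (ball y r ∩ S).eq_empty_or_nonempty with h | ⟨x, hxy, hxS⟩
  · simp [h]
  have hsub : ball y r ∩ S ⊆ S ∩ ball x (2 * r) := fun p ⟨hp, hpS⟩ => by
    refine ⟨hpS, ?_⟩
    rw [mem_ball] at hp hxy ⊢
    linarith [dist_triangle p y x, dist_comm x y]
  calc μH[2] (ball y r ∩ S) ≤ μH[2] (S ∩ ball x (2 * r)) := measure_mono hsub
    _ ≤ ENNReal.ofReal (Λ * Real.pi * (2 * r) ^ 2) := hS x hxS _ (by positivity)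
    _ = ENNReal.ofReal (4 * Λ * Real.pi * r ^ 2) := by ring_nf

theorem isLocallyFiniteMeasure (hS : UpperAhlfors Λ S) :
    IsLocallyFiniteMeasure (μH[2].restrict S) :=
  ⟨fun y => ⟨ball y 1, ball_mem_nhds y one_pos,
    (hS.measure_restrict_ball_le y one_pos).trans_lt (by simp)⟩⟩

theorem lintegral_enorm_sq_le (hS : UpperAhlfors Λ S) {w : E3 → ℝ} (hw : ContDiff ℝ 1 w)
    (hcw : HasCompactSupport w) :
    ∫⁻ x in S, ‖w x‖ₑ ^ 2 ∂μH[2] ≤ ENNReal.ofReal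
      (32 * Real.pi / volume.real (ball (0 : E3) 1) * Λ * ∫ x, (w x ^ 2 + ‖gradient w x‖ ^ 2)) := by
  have := hS.isLocallyFiniteMeasure
  have hκ : 0 < volume.real (ball (0 : E3) 1) :=
    ENNReal.toReal_pos (measure_ball_pos volume 0 one_pos).ne' measure_ball_lt_top.ne
  have h := measure_ball_mul_lintegral_enorm_sq_le volume (ν := μH[2].restrict S)
    (fun y r hr => by
      rw [finrank_euclideanSpace_fin]; exact hS.measure_restrict_ball_le y hr.1) hw
  rw [lintegral_enorm_sq_add_lintegral_enorm_fderiv_sq hw hcw, ← ofReal_measureReal] at h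
  have hκ' : ENNReal.ofReal (volume.real (ball (0 : E3) 1)) ≠ 0 := (ENNReal.ofReal_pos.2 hκ).ne'
  refine ((ENNReal.le_div_iff_mul_le (.inl hκ') (.inl ENNReal.ofReal_ne_top)).2
    ((mul_comm _ _).trans_le h)).trans_eq ?_
  rw [← ENNReal.ofReal_ofNat, ← ENNReal.ofReal_mul (by norm_num),
    ← ENNReal.ofReal_mul' (integral_nonneg fun x => by positivity), ← ENNReal.ofReal_div_of_pos hκ]
  congr 1
  ring

end UpperAhlfors

theorem stmt11 :
    ∃ C > (0 : ℝ), ∀ (Λ : ℝ), 0 < Λ → ∀ S : Set E3, UpperAhlfors Λ S →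
      ∀ u v : E3 → ℝ, ContDiff ℝ 1 u → HasCompactSupport u →
        ContDiff ℝ 1 v → HasCompactSupport v →
        ∫⁻ x in S, ENNReal.ofReal |u x * v x| ∂μH[2] ≤
          ENNReal.ofReal (C * Λ *
            Real.sqrt (∫ x, (u x ^ 2 + ‖gradient u x‖ ^ 2)) *
            Real.sqrt (∫ x, (v x ^ 2 + ‖gradient v x‖ ^ 2))) := by
  have hκ : 0 < volume.real (ball (0 : E3) 1) :=
    ENNReal.toReal_pos (measure_ball_pos volume 0 one_pos).ne' measure_ball_lt_top.ne
  refine ⟨32 * Real.pi / volume.real (ball (0 : E3) 1), by positivity,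
    fun Λ hΛ S hS u v hu hcu hv hcv => ?_⟩
  have hNu : 0 ≤ ∫ x, (u x ^ 2 + ‖gradient u x‖ ^ 2) := integral_nonneg fun x => by positivity
  have hNv : 0 ≤ ∫ x, (v x ^ 2 + ‖gradient v x‖ ^ 2) := integral_nonneg fun x => by positivity
  rw [← ENNReal.pow_le_pow_left_iff two_ne_zero]
  calc (∫⁻ x in S, ENNReal.ofReal |u x * v x| ∂μH[2]) ^ 2
      = (∫⁻ x in S, ‖u x‖ₑ * ‖v x‖ₑ ∂μH[2]) ^ 2 := by
        simp_rw [← Real.enorm_eq_ofReal_abs, enorm_mul]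
    _ ≤ (∫⁻ x in S, ‖u x‖ₑ ^ 2 ∂μH[2]) * ∫⁻ x in S, ‖v x‖ₑ ^ 2 ∂μH[2] :=
        sq_lintegral_mul_le hu.continuous.enorm.aemeasurable hv.continuous.enorm.aemeasurable
    _ ≤ _ := mul_le_mul' (hS.lintegral_enorm_sq_le hu hcu) (hS.lintegral_enorm_sq_le hv hcv)
    _ = _ := by
        rw [← ENNReal.ofReal_mul (by positivity), ← ENNReal.ofReal_pow (by positivity)]
        congr 1
        rw [mul_pow, mul_pow, Real.sq_sqrt hNu, Real.sq_sqrt hNv]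
        ring

end
end

section
/- Let ε, R > 0 and x₀ ∈ ℝ³, and define w : ℝ³ → ℝ by w(x) = exp((‖x − x₀‖² − R²)/(8 ε R)). Then w is smooth, its Laplacian (the sum of its second partial derivatives) satisfies Δw(x) = (‖x − x₀‖²/(16 ε² R²) + 3/(4 ε R)) · w(x) for every x ∈ ℝ³, and if moreover R ≥ 9 ε, then 4 ε² Δw(x) ≤ w(x) for every x in the open ball B(x₀, R), i.e. w satisfies −4ε²Δw + w ≥ 0 on B(x₀,R). -/
open Metric

noncomputable section

/-- The Laplacian on `ℝ³`: the sum of the second partial derivatives. -/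
def lap (w : E3 → ℝ) (x : E3) : ℝ :=
  ∑ i : Fin 3,
    fderiv ℝ (fun y => fderiv ℝ w y (EuclideanSpace.single i 1)) x (EuclideanSpace.single i 1)

theorem stmt12 (ε R : ℝ) (hε : 0 < ε) (hR : 0 < R) (x₀ : E3)
    (w : E3 → ℝ)
    (hw : ∀ x, w x = Real.exp ((‖x - x₀‖ ^ 2 - R ^ 2) / (8 * ε * R))) :
    ContDiff ℝ (⊤ : ℕ∞) w ∧
    (∀ x, lap w x = (‖x - x₀‖ ^ 2 / (16 * ε ^ 2 * R ^ 2) + 3 / (4 * ε * R)) * w x) ∧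
    (9 * ε ≤ R → ∀ x ∈ Metric.ball x₀ R, 4 * ε ^ 2 * lap w x ≤ w x) := by
  have h8 : (8 * ε * R) ≠ 0 := by positivity
  set c : ℝ := (8 * ε * R)⁻¹ with hc
  have hwg : ∀ x, w x = Real.exp ((‖x - x₀‖ ^ 2 - R ^ 2) * c) := by
    intro x; rw [hw x, div_eq_mul_inv]
  have hwfun : w = fun y => Real.exp ((‖y - x₀‖ ^ 2 - R ^ 2) * c) := funext hwg
  -- smoothness
  have hsmooth : ContDiff ℝ (⊤ : ℕ∞) w := by
    rw [hwfun]
    exact Real.contDiff_exp.comp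
      ((((contDiff_id.sub contDiff_const).norm_sq ℝ).sub contDiff_const).mul contDiff_const)
  -- derivative of w
  have hw' : ∀ x : E3, HasFDerivAt w ((w x * (2 * c)) • innerSL ℝ (x - x₀)) x := by
    intro x
    have h1 : HasFDerivAt (fun y : E3 => ‖y - x₀‖ ^ 2)
        (2 • (innerSL ℝ (x - x₀))) x := by
      simpa using ((hasFDerivAt_id x).sub_const x₀).norm_sq
    have h2 : HasFDerivAt (fun y : E3 => (‖y - x₀‖ ^ 2 - R ^ 2) * c)
        (c • (2 • (innerSL ℝ (x - x₀)))) x := (h1.sub_const (R ^ 2)).mul_const c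
    have h4 : HasFDerivAt w
        (Real.exp ((‖x - x₀‖ ^ 2 - R ^ 2) * c) • c • 2 • innerSL ℝ (x - x₀)) x := by
      rw [hwfun]; exact h2.exp
    refine h4.congr_fderiv ?_
    ext v
    simp [hwg x]
    ring
  -- first partials as explicit functions
  have hF : ∀ i : Fin 3, (fun y => fderiv ℝ w y (EuclideanSpace.single i 1)) =
      fun y => w y * ((2 * c) * ((y - x₀) i)) := by
    intro i
    funext y
    rw [(hw' y).fderiv]
    simp only [ContinuousLinearMap.coe_smul', Pi.smul_apply, innerSL_apply_apply, smul_eq_mul]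
    rw [real_inner_comm, EuclideanSpace.inner_single_left]
    simp [mul_assoc]
  -- second partials
  have hsecond : ∀ (i : Fin 3) (x : E3),
      fderiv ℝ (fun y => fderiv ℝ w y (EuclideanSpace.single i 1)) x
        (EuclideanSpace.single i 1)
      = w x * (2 * c) + (2 * c * ((x - x₀) i)) * (w x * (2 * c) * ((x - x₀) i)) := by
    intro i x
    rw [hF i]
    have hcoord : HasFDerivAt (fun y : E3 => (2 * c) * ((y - x₀) i))
        ((2 * c) • (EuclideanSpace.proj i : E3 →L[ℝ] ℝ)) x := by
      exact (((EuclideanSpace.proj (𝕜 := ℝ) i).hasFDerivAt (x := x)).sub_const (x₀ i)).const_mul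
        (2 * c)
    have hprod := (hw' x).mul hcoord
    rw [show (fun y : E3 => w y * (2 * c * (y - x₀) i)) = (w * fun y : E3 => 2 * c * (y - x₀) i) from rfl, hprod.fderiv]
    simp only [ContinuousLinearMap.add_apply, ContinuousLinearMap.coe_smul', Pi.smul_apply,
      innerSL_apply_apply, smul_eq_mul, PiLp.proj_apply]
    rw [real_inner_comm, EuclideanSpace.inner_single_left]
    simp [EuclideanSpace.single_apply]
  -- sum of squares of coordinates
  have hsq : ∀ v : E3, ∑ i : Fin 3, (v i) ^ 2 = ‖v‖ ^ 2 := by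
    intro v
    rw [← real_inner_self_eq_norm_sq]
    simp only [PiLp.inner_apply, RCLike.inner_apply, conj_trivial, sq]
  -- Laplacian formula
  have hlap : ∀ x, lap w x =
      (‖x - x₀‖ ^ 2 / (16 * ε ^ 2 * R ^ 2) + 3 / (4 * ε * R)) * w x := by
    intro x
    have : lap w x = ∑ i : Fin 3,
        (w x * (2 * c) + (2 * c * ((x - x₀) i)) * (w x * (2 * c) * ((x - x₀) i))) := by
      unfold lap
      exact Finset.sum_congr rfl fun i _ => hsecond i x
    rw [this]
    have expand : ∀ i : Fin 3,
        w x * (2 * c) + (2 * c * ((x - x₀) i)) * (w x * (2 * c) * ((x - x₀) i))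
        = w x * (2 * c) + (4 * c ^ 2 * w x) * ((x - x₀) i) ^ 2 := by
      intro i; ring
    rw [Finset.sum_congr rfl fun i _ => expand i]
    rw [Finset.sum_add_distrib]
    have e1 : ∑ i : Fin 3, (4 * c ^ 2 * w x) * ((x - x₀) i) ^ 2
        = (4 * c ^ 2 * w x) * ‖x - x₀‖ ^ 2 := by
      rw [← Finset.mul_sum, hsq]
    rw [e1]
    simp only [Finset.sum_const, Finset.card_univ, Fintype.card_fin, nsmul_eq_mul,
      Nat.cast_ofNat]
    rw [hc]
    field_simp
    ring
  refine ⟨hsmooth, hlap, ?_⟩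
  -- inequality
  intro hRe x hx
  rw [Metric.mem_ball, dist_eq_norm] at hx
  have hn : ‖x - x₀‖ ^ 2 ≤ R ^ 2 := by
    have := norm_nonneg (x - x₀)
    nlinarith
  have hwpos : 0 < w x := by rw [hw x]; exact Real.exp_pos _
  rw [hlap x]
  have hA : 4 * ε ^ 2 * (‖x - x₀‖ ^ 2 / (16 * ε ^ 2 * R ^ 2) + 3 / (4 * ε * R)) ≤ 1 := by
    have t1 : 4 * ε ^ 2 * (‖x - x₀‖ ^ 2 / (16 * ε ^ 2 * R ^ 2)) ≤ 1 / 4 := by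
      rw [mul_div_assoc', div_le_div_iff₀ (by positivity) (by norm_num)]
      nlinarith
    have t2 : 4 * ε ^ 2 * (3 / (4 * ε * R)) ≤ 1 / 3 := by
      rw [mul_div_assoc', div_le_div_iff₀ (by positivity) (by norm_num)]
      nlinarith
    nlinarith
  calc 4 * ε ^ 2 * ((‖x - x₀‖ ^ 2 / (16 * ε ^ 2 * R ^ 2) + 3 / (4 * ε * R)) * w x)
      = (4 * ε ^ 2 * (‖x - x₀‖ ^ 2 / (16 * ε ^ 2 * R ^ 2) + 3 / (4 * ε * R))) * w x := by ring
    _ ≤ 1 * w x := mul_le_mul_of_nonneg_right hA hwpos.le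
    _ = w x := one_mul _
end
end

section
/- Let ε, R > 0 with R ≥ 9ε, let x₀ ∈ ℝ³, and let v : ℝ³ → ℝ be continuous on the closed ball B̄(x₀,R), twice continuously differentiable on the open ball B(x₀,R), satisfy 0 ≤ v ≤ 1 on B̄(x₀,R), and solve 4ε²Δv(x) = v(x) for every x ∈ B(x₀,R). Then v(x₀) ≤ exp(−R/(8ε)). -/
open Metric

noncomputable section

/-!
The barrier `w x = exp ((‖x - x₀‖² - R²) / (8εR))` has `Δw = w · (4‖x - x₀‖² / (8εR)² + 6 / (8εR))`,
so `4ε²Δw / w ≤ 1/4 + 3ε/R ≤ 1` on the ball when `R ≥ 9ε`, and `w = 1 ≥ v` on the sphere.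
Hence `u = v - w` satisfies `u ≤ 4ε²Δu` in the ball and `u ≤ 0` on the sphere. At an interior
maximum every second directional derivative of `u` is nonpositive, so the maximum of `u` is `≤ 0`,
and `v x₀ ≤ w x₀ = exp (-R / (8ε))`.
-/

open Filter Topology

/- If `f'' a > 0`, the second-derivative test makes `a` also a local minimum, so `f` is locally
constant and `f'' a = 0`. -/
theorem IsLocalMax.deriv_deriv_nonpos {f : ℝ → ℝ} {a : ℝ} (hmax : IsLocalMax f a)
    (hc : ContinuousAt f a) : deriv (deriv f) a ≤ 0 := by
  by_contra! hpos
  have hmin : IsLocalMin f a := isLocalMin_of_deriv_deriv_pos hpos hmax.deriv_eq_zero hc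
  have hconst : f =ᶠ[𝓝 a] fun _ => f a :=
    (hmax.and hmin).mono fun _ h => le_antisymm h.1 h.2
  have hderiv : deriv f =ᶠ[𝓝 a] fun _ => 0 := by
    simpa using hconst.deriv
  simp [hderiv.deriv_eq] at hpos

section Directional

variable {E F : Type*} [NormedAddCommGroup E] [NormedSpace ℝ E]
  [NormedAddCommGroup F] [NormedSpace ℝ F] {u : E → F} {x : E}

theorem ContDiffAt.differentiableAt_fderiv_apply (hu : ContDiffAt ℝ 2 u x) (e : E) :
    DifferentiableAt ℝ (fun z => fderiv ℝ u z e) x :=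
  ((hu.fderiv_right (m := 1) le_rfl).differentiableAt one_ne_zero).clm_apply
    (differentiableAt_const e)

theorem ContDiffAt.eventually_differentiableAt (hu : ContDiffAt ℝ 2 u x) :
    ∀ᶠ z in 𝓝 x, DifferentiableAt ℝ u z :=
  (hu.eventually (by simp)).mono fun _ h => h.differentiableAt two_ne_zero

theorem fderiv_fderiv_apply_eq_deriv_deriv_line (hu : ContDiffAt ℝ 2 u x) (e : E) :
    fderiv ℝ (fun z => fderiv ℝ u z e) x e = deriv (deriv fun t : ℝ => u (x + t • e)) 0 := by
  have hline : ∀ t : ℝ, HasDerivAt (fun t : ℝ => x + t • e) e t := fun t => by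
    simpa using ((hasDerivAt_id t).smul_const e).const_add x
  have htendsto : Tendsto (fun t : ℝ => x + t • e) (𝓝 0) (𝓝 x) := by
    simpa using (hline 0).continuousAt.tendsto
  have hfirst : deriv (fun t : ℝ => u (x + t • e)) =ᶠ[𝓝 0] fun t => fderiv ℝ u (x + t • e) e :=
    (htendsto.eventually hu.eventually_differentiableAt).mono fun t h =>
      (h.hasFDerivAt.comp_hasDerivAt t (hline t)).deriv
  have hsecond : HasDerivAt (fun t : ℝ => fderiv ℝ u (x + t • e) e)
      (fderiv ℝ (fun z => fderiv ℝ u z e) x e) 0 :=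
    (hu.differentiableAt_fderiv_apply e).hasFDerivAt.comp_hasDerivAt_of_eq 0 (hline 0)
      (by simp)
  rw [hfirst.deriv_eq, hsecond.deriv]

theorem IsLocalMax.fderiv_fderiv_apply_self_nonpos {u : E → ℝ} (hu : ContDiffAt ℝ 2 u x)
    (hmax : IsLocalMax u x) (e : E) : fderiv ℝ (fun z => fderiv ℝ u z e) x e ≤ 0 := by
  have hline : Continuous fun t : ℝ => x + t • e := by fun_prop
  have hmax_line : IsLocalMax (fun t : ℝ => u (x + t • e)) 0 :=
    IsLocalMax.comp_continuous (g := fun t : ℝ => x + t • e) (by simpa using hmax)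
      hline.continuousAt
  rw [fderiv_fderiv_apply_eq_deriv_deriv_line hu e]
  exact hmax_line.deriv_deriv_nonpos
    (hu.continuousAt.comp_of_eq hline.continuousAt (by simp))

end Directional

theorem deriv_deriv_exp_quadratic (A B C a : ℝ) :
    deriv (deriv fun t : ℝ => Real.exp ((A + 2 * B * t + C * t ^ 2) / a)) 0
      = Real.exp (A / a) * ((2 * B / a) ^ 2 + 2 * C / a) := by
  have hp : ∀ t : ℝ, HasDerivAt (fun t : ℝ => (A + 2 * B * t + C * t ^ 2) / a)
      ((2 * B + 2 * C * t) / a) t := fun t => by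
    refine ((((hasDerivAt_id' t).const_mul (2 * B)).const_add A).fun_add
      ((hasDerivAt_pow 2 t).const_mul C)).div_const a |>.congr_deriv ?_
    norm_num
    ring
  have hfirst : deriv (fun t : ℝ => Real.exp ((A + 2 * B * t + C * t ^ 2) / a))
      = fun t => Real.exp ((A + 2 * B * t + C * t ^ 2) / a) * ((2 * B + 2 * C * t) / a) :=
    funext fun t => (hp t).exp.deriv
  have hsecond := (hp 0).exp.fun_mul
    ((((hasDerivAt_id' (0:ℝ)).const_mul (2 * C)).const_add (2 * B)).div_const a)
  rw [hfirst, hsecond.deriv]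
  simp
  ring

section Barrier

open scoped RealInnerProductSpace

variable {F : Type*} [NormedAddCommGroup F] [InnerProductSpace ℝ F]

theorem norm_add_smul_sq (y e : F) (t : ℝ) :
    ‖y + t • e‖ ^ 2 = ‖y‖ ^ 2 + 2 * ⟪y, e⟫ * t + ‖e‖ ^ 2 * t ^ 2 := by
  rw [norm_add_sq_real, inner_smul_right, norm_smul, mul_pow, Real.norm_eq_abs, sq_abs]; ring

theorem contDiff_exp_norm_sub_sq (x₀ : F) (a b : ℝ) {n : WithTop ℕ∞} :
    ContDiff ℝ n fun y : F => Real.exp ((‖y - x₀‖ ^ 2 - b) / a) :=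
  ((((contDiff_norm_sq ℝ).comp (contDiff_id.sub contDiff_const)).sub contDiff_const).div_const
    a).exp

theorem fderiv_fderiv_apply_exp_norm_sub_sq (x₀ x e : F) (a b : ℝ) :
    fderiv ℝ (fun z => fderiv ℝ (fun y => Real.exp ((‖y - x₀‖ ^ 2 - b) / a)) z e) x e
      = Real.exp ((‖x - x₀‖ ^ 2 - b) / a) * ((2 * ⟪x - x₀, e⟫ / a) ^ 2 + 2 * ‖e‖ ^ 2 / a) := by
  rw [fderiv_fderiv_apply_eq_deriv_deriv_line (contDiff_exp_norm_sub_sq x₀ a b).contDiffAt e]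
  have hline : (fun t : ℝ => Real.exp ((‖x + t • e - x₀‖ ^ 2 - b) / a))
      = fun t => Real.exp ((‖x - x₀‖ ^ 2 - b + 2 * ⟪x - x₀, e⟫ * t + ‖e‖ ^ 2 * t ^ 2) / a) := by
    funext t
    rw [add_sub_right_comm, norm_add_smul_sq]
    ring_nf
  rw [hline, deriv_deriv_exp_quadratic]

end Barrier

theorem lap_exp_norm_sub_sq (x₀ x : E3) (a b : ℝ) :
    lap (fun y => Real.exp ((‖y - x₀‖ ^ 2 - b) / a)) x
      = Real.exp ((‖x - x₀‖ ^ 2 - b) / a) * (4 * ‖x - x₀‖ ^ 2 / a ^ 2 + 6 / a) := by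
  simp only [lap, fderiv_fderiv_apply_exp_norm_sub_sq]
  rw [← Finset.mul_sum, EuclideanSpace.norm_sq_eq]
  simp [EuclideanSpace.inner_single_right, Fin.sum_univ_three]
  ring

theorem lap_nonpos_of_isLocalMax {u : E3 → ℝ} {x : E3} (hu : ContDiffAt ℝ 2 u x)
    (hmax : IsLocalMax u x) : lap u x ≤ 0 :=
  Finset.sum_nonpos fun _ _ => hmax.fderiv_fderiv_apply_self_nonpos hu _

theorem lap_sub {u w : E3 → ℝ} {x : E3} (hu : ContDiffAt ℝ 2 u x) (hw : ContDiffAt ℝ 2 w x) :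
    lap (u - w) x = lap u x - lap w x := by
  simp only [lap, ← Finset.sum_sub_distrib]
  refine Finset.sum_congr rfl fun i _ => ?_
  set e : E3 := EuclideanSpace.single i 1
  have hfirst : (fun z => fderiv ℝ (u - w) z e) =ᶠ[𝓝 x]
      fun z => fderiv ℝ u z e - fderiv ℝ w z e := by
    filter_upwards [hu.eventually_differentiableAt, hw.eventually_differentiableAt] with z hzu hzw
    rw [fderiv_sub hzu hzw, sub_apply]
  rw [hfirst.fderiv_eq, fderiv_fun_sub (hu.differentiableAt_fderiv_apply e)
    (hw.differentiableAt_fderiv_apply e), sub_apply]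

theorem nonpos_on_closedBall_of_le_mul_lap {u : E3 → ℝ} {x₀ : E3} {R k : ℝ} (hk : 0 ≤ k)
    (hcont : ContinuousOn u (closedBall x₀ R)) (hC2 : ContDiffOn ℝ 2 u (ball x₀ R))
    (hsphere : ∀ x ∈ sphere x₀ R, u x ≤ 0) (hball : ∀ x ∈ ball x₀ R, u x ≤ k * lap u x) :
    ∀ x ∈ closedBall x₀ R, u x ≤ 0 := by
  intro x hx
  obtain ⟨y, hy, hymax⟩ := (isCompact_closedBall x₀ R).exists_isMaxOn ⟨x, hx⟩ hcont
  suffices u y ≤ 0 from (hymax hx).trans this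
  rw [← ball_union_sphere] at hy
  rcases hy with hy | hy
  · have hnhds : ball x₀ R ∈ 𝓝 y := isOpen_ball.mem_nhds hy
    have hlocal : IsLocalMax u y :=
      hymax.isLocalMax (Filter.mem_of_superset hnhds ball_subset_closedBall)
    exact (hball y hy).trans
      (mul_nonpos_of_nonneg_of_nonpos hk (lap_nonpos_of_isLocalMax (hC2.contDiffAt hnhds) hlocal))
  · exact hsphere y hy

theorem mul_lap_exp_norm_sub_sq_le {ε R : ℝ} (hε : 0 < ε) (hR : 9 * ε ≤ R) {x₀ x : E3}
    (hx : x ∈ ball x₀ R) :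
    4 * ε ^ 2 * lap (fun y => Real.exp ((‖y - x₀‖ ^ 2 - R ^ 2) / (8 * ε * R))) x
      ≤ Real.exp ((‖x - x₀‖ ^ 2 - R ^ 2) / (8 * ε * R)) := by
  have hR0 : 0 < R := by linarith
  have hdist : ‖x - x₀‖ ^ 2 ≤ R ^ 2 := by
    rw [mem_ball_iff_norm] at hx
    gcongr
  have hquad : 4 * ε ^ 2 * (4 * ‖x - x₀‖ ^ 2 / (8 * ε * R) ^ 2) = ‖x - x₀‖ ^ 2 / (4 * R ^ 2) := by
    field_simp
    ring
  have hlin : 4 * ε ^ 2 * (6 / (8 * ε * R)) = 3 * ε / R := by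
    field_simp
    ring
  have hcoeff : 4 * ε ^ 2 * (4 * ‖x - x₀‖ ^ 2 / (8 * ε * R) ^ 2 + 6 / (8 * ε * R)) ≤ 1 := by
    rw [mul_add, hquad, hlin]
    have hquad_le : ‖x - x₀‖ ^ 2 / (4 * R ^ 2) ≤ 1 / 4 := by
      rw [div_le_iff₀ (by positivity)]
      linarith
    have hlin_le : 3 * ε / R ≤ 1 / 3 := by
      rw [div_le_iff₀ hR0]
      linarith
    linarith
  rw [lap_exp_norm_sub_sq, mul_left_comm]
  exact mul_le_of_le_one_right (Real.exp_pos _).le hcoeff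

theorem stmt13 (ε R : ℝ) (hε : 0 < ε) (hR : 9 * ε ≤ R) (x₀ : E3)
    (v : E3 → ℝ)
    (hcont : ContinuousOn v (Metric.closedBall x₀ R))
    (hC2 : ContDiffOn ℝ 2 v (Metric.ball x₀ R))
    (hbd : ∀ x ∈ Metric.closedBall x₀ R, 0 ≤ v x ∧ v x ≤ 1)
    (heq : ∀ x ∈ Metric.ball x₀ R, 4 * ε ^ 2 * lap v x = v x) :
    v x₀ ≤ Real.exp (-(R / (8 * ε))) := by
  set w : E3 → ℝ := fun y => Real.exp ((‖y - x₀‖ ^ 2 - R ^ 2) / (8 * ε * R))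
  have hR0 : 0 < R := by linarith
  have hw_smooth : ContDiff ℝ 2 w := contDiff_exp_norm_sub_sq x₀ _ _
  have hle : ∀ x ∈ closedBall x₀ R, (v - w) x ≤ 0 := by
    refine nonpos_on_closedBall_of_le_mul_lap (k := 4 * ε ^ 2) (by positivity)
      (hcont.sub hw_smooth.continuous.continuousOn) (hC2.sub hw_smooth.contDiffOn) ?_ ?_
    · intro x hx
      have hv := (hbd x (sphere_subset_closedBall hx)).2
      rw [mem_sphere_iff_norm] at hx
      simpa [w, hx] using hv
    · intro x hx
      have hbarrier : 4 * ε ^ 2 * lap w x ≤ w x := mul_lap_exp_norm_sub_sq_le hε hR hx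
      rw [Pi.sub_apply, lap_sub (hC2.contDiffAt (isOpen_ball.mem_nhds hx)) hw_smooth.contDiffAt,
        mul_sub, heq x hx]
      linarith
  have hcenter : w x₀ = Real.exp (-(R / (8 * ε))) := by
    simp only [w, sub_self, norm_zero]
    congr 1
    rw [div_eq_iff (by positivity)]
    field_simp
    ring
  simpa [hcenter] using hle x₀ (mem_closedBall_self hR0.le)
end
end
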